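/- arXiv:2009.03102 — 2 statements merged into one kernel-verified Lean document; each statement's English description precedes it below -/
import Mathlib

section
/- Let N ≥ 1, ν ∈ ℝ and u ∈ C¹(ℝ^N, ℝ). For x₀ ∈ ℝ^N and λ > 0 define u_{x₀,λ}(x) = (λ/|x − x₀|)^ν u(λ²(x − x₀)/|x − x₀|² + x₀) for x ∈ ℝ^N\{x₀}. If for every x₀ ∈ ℝ^N and every λ > 0 one has u_{x₀,λ}(x) ≥ u(x) for all x ∈ B_λ(x₀)\{x₀}, then u is constant on ℝ^N. -/
open MeasureTheory Real Filter Topology Metric RealInnerProductSpace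
open scoped ENNReal

noncomputable section

/-- `ℝ^N` -/
abbrev EN (N : ℕ) := EuclideanSpace ℝ (Fin N)

variable {N : ℕ}

/-- membership in `D^{1,2}(ℝ^N)`: a function in `L^{2N/(N-2)}` with square-integrable
gradient. -/
def MemD12 (N : ℕ) (u : EN N → ℝ) : Prop :=
  MemLp u (ENNReal.ofReal (2 * (N : ℝ) / ((N : ℝ) - 2))) volume ∧
    Integrable (fun x => ‖gradient u x‖ ^ 2) volume

/-- the Laplacian, as the sum of the second partial derivatives -/
def lap (u : EN N → ℝ) (x : EN N) : ℝ :=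
  ∑ i, fderiv ℝ (fun y => fderiv ℝ u y (EuclideanSpace.single i 1)) x
    (EuclideanSpace.single i 1)

/-- the Riesz convolution `(|x|^{-4} ∗ f)(x)` -/
def conv4 (f : EN N → ℝ) (x : EN N) : ℝ := ∫ y, f y / ‖x - y‖ ^ 4

/-- `∫ (|∇u|² + |∇v|²)` -/
def gradE (u v : EN N → ℝ) : ℝ := ∫ x, (‖gradient u x‖ ^ 2 + ‖gradient v x‖ ^ 2)

/-- `∫ (|∇u|² + |∇v|² + V₁ u² + V₂ v²)` -/
def quadV (V1 V2 : EN N → ℝ) (u v : EN N → ℝ) : ℝ :=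
  ∫ x, (‖gradient u x‖ ^ 2 + ‖gradient v x‖ ^ 2 + V1 x * u x ^ 2 + V2 x * v x ^ 2)

/-- the quartic nonlocal term with positive parts -/
def Qp (a1 a2 b : ℝ) (u v : EN N → ℝ) : ℝ :=
  ∫ x, ∫ y,
    (a1 * max (u x) 0 ^ 2 * max (u y) 0 ^ 2 + a2 * max (v x) 0 ^ 2 * max (v y) 0 ^ 2 +
      2 * b * max (u x) 0 ^ 2 * max (v y) 0 ^ 2) / ‖x - y‖ ^ 4

/-- the quartic nonlocal term (no positive parts) -/
def Q (a1 a2 b : ℝ) (u v : EN N → ℝ) : ℝ :=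
  ∫ x, ∫ y,
    (a1 * u x ^ 2 * u y ^ 2 + a2 * v x ^ 2 * v y ^ 2 +
      2 * b * u x ^ 2 * v y ^ 2) / ‖x - y‖ ^ 4

/-- the double Hartree integral `∫∫ u²(x) v²(y) |x-y|^{-4}` -/
def DD (u v : EN N → ℝ) : ℝ := ∫ x, ∫ y, u x ^ 2 * v y ^ 2 / ‖x - y‖ ^ 4

/-- the double Hartree integral with positive parts -/
def DDp (u v : EN N → ℝ) : ℝ :=
  ∫ x, ∫ y, max (u x) 0 ^ 2 * max (v y) 0 ^ 2 / ‖x - y‖ ^ 4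

/-- the energy functional `J` (with positive parts in the nonlocal term) -/
def JV (a1 a2 b : ℝ) (V1 V2 : EN N → ℝ) (u v : EN N → ℝ) : ℝ :=
  (1 / 2) * quadV V1 V2 u v - (1 / 4) * Qp a1 a2 b u v

/-- the energy functional `𝒥` (with `|u|²` in the nonlocal term) -/
def JVabs (a1 a2 b : ℝ) (V1 V2 : EN N → ℝ) (u v : EN N → ℝ) : ℝ :=
  (1 / 2) * quadV V1 V2 u v - (1 / 4) * Q a1 a2 b u v

/-- the Nehari manifold of `J` : `(u,v) ≠ (0,0)` and `⟨J'(u,v),(u,v)⟩ = 0` -/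
def NehariV (a1 a2 b : ℝ) (V1 V2 : EN N → ℝ) (u v : EN N → ℝ) : Prop :=
  MemD12 N u ∧ MemD12 N v ∧ ¬(u = 0 ∧ v = 0) ∧ quadV V1 V2 u v = Qp a1 a2 b u v

/-- the Nehari manifold of `𝒥` -/
def NehariVabs (a1 a2 b : ℝ) (V1 V2 : EN N → ℝ) (u v : EN N → ℝ) : Prop :=
  MemD12 N u ∧ MemD12 N v ∧ ¬(u = 0 ∧ v = 0) ∧ quadV V1 V2 u v = Q a1 a2 b u v

/-- the least-energy level `c` of `J` -/
def cV (N : ℕ) (a1 a2 b : ℝ) (V1 V2 : EN N → ℝ) : ℝ :=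
  sInf {r | ∃ u v : EN N → ℝ, NehariV a1 a2 b V1 V2 u v ∧ r = JV a1 a2 b V1 V2 u v}

/-- the least-energy level `c_∞` of `J_∞` -/
def cinf (N : ℕ) (a1 a2 b : ℝ) : ℝ := cV N a1 a2 b 0 0

/-- the least-energy level of `𝒥` -/
def cVabs (N : ℕ) (a1 a2 b : ℝ) (V1 V2 : EN N → ℝ) : ℝ :=
  sInf {r | ∃ u v : EN N → ℝ, NehariVabs a1 a2 b V1 V2 u v ∧ r = JVabs a1 a2 b V1 V2 u v}

/-- the least-energy level `c_∞` of `𝒥_∞` -/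
def cinfabs (N : ℕ) (a1 a2 b : ℝ) : ℝ := cVabs N a1 a2 b 0 0

/-- the best constant `S_{H,L}` -/
def SHL (N : ℕ) : ℝ :=
  sInf {r | ∃ u : EN N → ℝ, MemD12 N u ∧ u ≠ 0 ∧
    r = (∫ x, ‖gradient u x‖ ^ 2) / Real.sqrt (DD u u)}

/-- the best Sobolev constant `S` of `D^{1,2}(ℝ^N) ↪ L^{2N/(N-2)}(ℝ^N)` -/
def Sconst (N : ℕ) : ℝ :=
  sInf {r | ∃ u : EN N → ℝ, MemD12 N u ∧ u ≠ 0 ∧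
    r = (∫ x, ‖gradient u x‖ ^ 2) /
      (∫ x, |u x| ^ (2 * (N : ℝ) / ((N : ℝ) - 2))) ^ (((N : ℝ) - 2) / (N : ℝ))}

/-- the sharp Hardy-Littlewood-Sobolev constant `C(N,4)` -/
def CN4 (N : ℕ) : ℝ :=
  Real.pi ^ (2 : ℝ) * (Real.Gamma ((N : ℝ) / 2 - 2) / Real.Gamma ((N : ℝ) - 2)) *
    (Real.Gamma ((N : ℝ) / 2) / Real.Gamma (N : ℝ)) ^ (-1 + 4 / (N : ℝ))

/-- `k₀ = (β-α₂)/(β²-α₁α₂)` -/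
def k0 (a1 a2 b : ℝ) : ℝ := (b - a2) / (b ^ 2 - a1 * a2)

/-- `l₀ = (β-α₁)/(β²-α₁α₂)` -/
def l0 (a1 a2 b : ℝ) : ℝ := (b - a1) / (b ^ 2 - a1 * a2)

/-- `R_N = (1/4) π^{-N/2} Γ((N-2)/2)` -/
def RNc (N : ℕ) : ℝ :=
  (1 / 4) * Real.pi ^ (-(N : ℝ) / 2) * Real.Gamma (((N : ℝ) - 2) / 2)

/-- `I(s) = π^{N/2} Γ((N-2s)/2) / Γ(N-s)` -/
def Ifun (N : ℕ) (s : ℝ) : ℝ :=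
  Real.pi ^ ((N : ℝ) / 2) * Real.Gamma (((N : ℝ) - 2 * s) / 2) / Real.Gamma ((N : ℝ) - s)

/-- the constant `C_N` in the definition of the standard bubble -/
def CNc (N : ℕ) : ℝ :=
  Sconst N ^ (-(((N : ℝ) - 4) / 4)) * CN4 N ^ (-(1 / 2 : ℝ)) *
    ((N : ℝ) * ((N : ℝ) - 2)) ^ (((N : ℝ) - 2) / 4)

/-- the standard bubble `U_{δ,z}` -/
def Ubub (N : ℕ) (δ : ℝ) (z : EN N) (x : EN N) : ℝ :=
  CNc N * (δ / (δ ^ 2 + ‖x - z‖ ^ 2)) ^ (((N : ℝ) - 2) / 2)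

/-- the `L^p(ℝ^N)` norm -/
def LpNorm (N : ℕ) (p : ℝ) (f : EN N → ℝ) : ℝ :=
  (eLpNorm f (ENNReal.ofReal p) volume).toReal

/-- the `L^p(Ω)` norm `|f|_{p,Ω}` -/
def lpOn (p : ℝ) (s : Set (EN N)) (f : EN N → ℝ) : ℝ :=
  (∫ x in s, |f x| ^ p) ^ (1 / p)

/-- test functions: smooth with compact support -/
def IsTest (φ : EN N → ℝ) : Prop := ContDiff ℝ (⊤ : ℕ∞) φ ∧ HasCompactSupport φ

/-- weak solution of the system with potentials (positive-part nonlinearity) -/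
def IsWeakSolV (a1 a2 b : ℝ) (V1 V2 : EN N → ℝ) (u v : EN N → ℝ) : Prop :=
  (∀ φ : EN N → ℝ, IsTest φ →
    (∫ x, (⟪gradient u x, gradient φ x⟫ + V1 x * u x * φ x)) =
      ∫ x, (a1 * conv4 (fun y => max (u y) 0 ^ 2) x +
        b * conv4 (fun y => max (v y) 0 ^ 2) x) * max (u x) 0 * φ x) ∧
  (∀ ψ : EN N → ℝ, IsTest ψ →
    (∫ x, (⟪gradient v x, gradient ψ x⟫ + V2 x * v x * ψ x)) =
      ∫ x, (a2 * conv4 (fun y => max (v y) 0 ^ 2) x +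
        b * conv4 (fun y => max (u y) 0 ^ 2) x) * max (v x) 0 * ψ x)

/-- weak solution of the system with potentials (plain nonlinearity `u²`) -/
def IsWeakSol (a1 a2 b : ℝ) (V1 V2 : EN N → ℝ) (u v : EN N → ℝ) : Prop :=
  (∀ φ : EN N → ℝ, IsTest φ →
    (∫ x, (⟪gradient u x, gradient φ x⟫ + V1 x * u x * φ x)) =
      ∫ x, (a1 * conv4 (fun y => u y ^ 2) x + b * conv4 (fun y => v y ^ 2) x) * u x * φ x) ∧
  (∀ ψ : EN N → ℝ, IsTest ψ →
    (∫ x, (⟪gradient v x, gradient ψ x⟫ + V2 x * v x * ψ x)) =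
      ∫ x, (a2 * conv4 (fun y => v y ^ 2) x + b * conv4 (fun y => u y ^ 2) x) * v x * ψ x)

/-- `⟨J'(u,v),(φ,ψ)⟩` -/
def Jpair (a1 a2 b : ℝ) (V1 V2 u v φ ψ : EN N → ℝ) : ℝ :=
  (∫ x, (⟪gradient u x, gradient φ x⟫ + ⟪gradient v x, gradient ψ x⟫ +
      V1 x * u x * φ x + V2 x * v x * ψ x)) -
  ∫ x, ∫ y,
    (a1 * max (u x) 0 ^ 2 * max (u y) 0 * φ y + a2 * max (v x) 0 ^ 2 * max (v y) 0 * ψ y +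
      b * max (v x) 0 ^ 2 * max (u y) 0 * φ y + b * max (u x) 0 ^ 2 * max (v y) 0 * ψ y) /
      ‖x - y‖ ^ 4

/-- Palais-Smale sequence for `J` at level `d` -/
def IsPSseq (a1 a2 b : ℝ) (V1 V2 : EN N → ℝ) (u v : ℕ → EN N → ℝ) (d : ℝ) : Prop :=
  Tendsto (fun n => JV a1 a2 b V1 V2 (u n) (v n)) atTop (𝓝 d) ∧
  ∀ ε > (0 : ℝ), ∃ n0 : ℕ, ∀ n ≥ n0, ∀ φ ψ : EN N → ℝ, MemD12 N φ → MemD12 N ψ →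
    gradE φ ψ ≤ 1 → |Jpair a1 a2 b V1 V2 (u n) (v n) φ ψ| ≤ ε

/-- weak convergence in `D^{1,2}` -/
def WeakD12 (N : ℕ) (u : ℕ → EN N → ℝ) (u0 : EN N → ℝ) : Prop :=
  ∀ φ : EN N → ℝ, MemD12 N φ →
    Tendsto (fun n => ∫ x, ⟪gradient (u n) x, gradient φ x⟫) atTop
      (𝓝 (∫ x, ⟪gradient u0 x, gradient φ x⟫))

/-- the rescaling `u_{r,z}(x) = r^{(N-2)/2} u (r x + z)` -/
def rescale (N : ℕ) (r : ℝ) (z : EN N) (u : EN N → ℝ) : EN N → ℝ :=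
  fun x => r ^ (((N : ℝ) - 2) / 2) * u (r • x + z)

/-- the `ν`-Kelvin transform of `f` with respect to the sphere `∂B_lam(x0)` -/
def kelvin (ν : ℝ) (x0 : EN N) (lam : ℝ) (f : EN N → ℝ) (x : EN N) : ℝ :=
  (lam / ‖x - x0‖) ^ ν * f ((lam ^ 2 / ‖x - x0‖ ^ 2) • (x - x0) + x0)

/-- the set `Γ_{x₀}` of radii `λ` such that the Kelvin transform of `f` dominates `f`
inside `B_σ(x₀)` for all `σ ∈ (0, λ]` -/
def GammaSet (ν : ℝ) (f : EN N → ℝ) (x0 : EN N) : Set ℝ :=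
  {lam | 0 < lam ∧ ∀ σ : ℝ, 0 < σ → σ ≤ lam →
    ∀ x ∈ Metric.ball x0 σ, x ≠ x0 → 0 ≤ kelvin ν x0 σ f x - f x}

/-- `min{sup Γ^u_{x₀}, sup Γ^v_{x₀}}`, valued in `ℝ≥0∞` -/
def lamMin (ν : ℝ) (u v : EN N → ℝ) (x0 : EN N) : ℝ≥0∞ :=
  min (sSup (ENNReal.ofReal '' GammaSet ν u x0)) (sSup (ENNReal.ofReal '' GammaSet ν v x0))

/-- `U_λ = u_λ - u` (Kelvin transform at the origin, exponent `N-2`) -/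
def Ulam (N : ℕ) (lam : ℝ) (u : EN N → ℝ) : EN N → ℝ :=
  fun x => kelvin ((N : ℝ) - 2) 0 lam u x - u x

/-- `W_λ = w_λ - w` (Kelvin transform at the origin, exponent `4`) -/
def Wlam (N : ℕ) (lam : ℝ) (w : EN N → ℝ) : EN N → ℝ :=
  fun x => kelvin (4 : ℝ) 0 lam w x - w x

/-- the set where `F < 0` inside the punctured ball `B_λ(0) \ {0}` -/
def negSet (N : ℕ) (lam : ℝ) (F : EN N → ℝ) : Set (EN N) :=
  {x | x ∈ Metric.ball (0 : EN N) lam ∧ x ≠ 0 ∧ F x < 0}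

/-- the nonlocal density `x ↦ ∫ [α₁|u⁺(x)|²|u⁺(y)|² + α₂|v⁺(x)|²|v⁺(y)|² +
2β|u⁺(x)|²|v⁺(y)|²] |x-y|^{-4} dy` -/
def nlDens (a1 a2 b : ℝ) (u v : EN N → ℝ) (x : EN N) : ℝ :=
  ∫ y, (a1 * max (u x) 0 ^ 2 * max (u y) 0 ^ 2 + a2 * max (v x) 0 ^ 2 * max (v y) 0 ^ 2 +
    2 * b * max (u x) 0 ^ 2 * max (v y) 0 ^ 2) / ‖x - y‖ ^ 4

/-- the barycenter map `β(u,v) ∈ ℝ^N` -/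
def bary (a1 a2 b : ℝ) (u v : EN N → ℝ) : EN N :=
  (∫ x, nlDens a1 a2 b u v x)⁻¹ • ∫ x, nlDens a1 a2 b u v x • ((1 + ‖x‖)⁻¹ • x)

/-- the concentration functional `γ(u,v)` -/
def gammaFn (a1 a2 b : ℝ) (u v : EN N → ℝ) : ℝ :=
  (∫ x, nlDens a1 a2 b u v x)⁻¹ *
    ∫ x, ‖(1 + ‖x‖)⁻¹ • x - bary a1 a2 b u v‖ * nlDens a1 a2 b u v x

/-- the set `ℳ = {(u,v) ∈ 𝒩 : β(u,v) = 0, γ(u,v) = 1/2}` -/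
def MMset (N : ℕ) (a1 a2 b : ℝ) (V1 V2 : EN N → ℝ) :
    Set ((EN N → ℝ) × (EN N → ℝ)) :=
  {p | NehariV a1 a2 b V1 V2 p.1 p.2 ∧ bary a1 a2 b p.1 p.2 = 0 ∧
    gammaFn a1 a2 b p.1 p.2 = 1 / 2}

/-- `c* = inf_ℳ J` -/
def cstar (N : ℕ) (a1 a2 b : ℝ) (V1 V2 : EN N → ℝ) : ℝ :=
  sInf {r | ∃ p ∈ MMset N a1 a2 b V1 V2, r = JV a1 a2 b V1 V2 p.1 p.2}

/-- the rescaled-translated profile `w_{δ,z}` -/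
def wdz (N : ℕ) (w : EN N → ℝ) (δ : ℝ) (z : EN N) : EN N → ℝ :=
  fun x => δ ^ (-(((N : ℝ) - 2) / 2)) * w (δ⁻¹ • (x - z))

/-- the Nehari projection factor `t_{(u,v)}` -/
def tproj (a1 a2 b : ℝ) (V1 V2 : EN N → ℝ) (u v : EN N → ℝ) : ℝ :=
  Real.sqrt (quadV V1 V2 u v / Q a1 a2 b u v)

/-- the Nehari projection `Θ(u,v) = (t|u|, t|v|)` -/
def Theta (a1 a2 b : ℝ) (V1 V2 : EN N → ℝ) (p : (EN N → ℝ) × (EN N → ℝ)) :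
    (EN N → ℝ) × (EN N → ℝ) :=
  (fun x => tproj a1 a2 b V1 V2 p.1 p.2 * |p.1 x|,
   fun x => tproj a1 a2 b V1 V2 p.1 p.2 * |p.2 x|)

/-- the `D^{1,2} × D^{1,2}` distance between pairs -/
def dH (p q : (EN N → ℝ) × (EN N → ℝ)) : ℝ :=
  Real.sqrt (∫ x, (‖gradient p.1 x - gradient q.1 x‖ ^ 2 +
    ‖gradient p.2 x - gradient q.2 x‖ ^ 2))

/-- the iterated rescaled remainder sequences of the global compactness lemma -/
def iterSeq (N : ℕ) (base : ℕ → EN N → ℝ) (A : ℕ → EN N → ℝ) (r : ℕ → ℕ → ℝ)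
    (z : ℕ → ℕ → EN N) : ℕ → ℕ → EN N → ℝ
  | 0 => base
  | j + 1 => fun n => rescale N (r (j + 1) n) (z (j + 1) n)
      (fun x => iterSeq N base A r z j n x - A j x)


/-- Li-Zhang rigidity: a function dominated by all its Kelvin transforms
inside the corresponding balls is constant. -/
theorem statement_12 (N : ℕ) (hN : 1 ≤ N) (ν : ℝ) (u : EN N → ℝ) (hu : ContDiff ℝ 1 u)
    (h : ∀ x0 : EN N, ∀ lam > (0 : ℝ), ∀ x ∈ Metric.ball x0 lam, x ≠ x0 →
      u x ≤ kelvin ν x0 lam u x) :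
    ∃ C : ℝ, ∀ x, u x = C := by
  
  have key : ∀ p q : EN N, u q ≤ u p := by
    intro p q
    rcases eq_or_ne p q with rfl | hne
    · exact le_refl _
    set t : ℝ := ‖p - q‖ with ht_def
    have ht : 0 < t := norm_pos_iff.mpr (sub_ne_zero.mpr hne)
    have main : ∀ R : ℝ, t < R →
        u q ≤ (Real.sqrt (R * (R - t)) / (R - t)) ^ ν * u p := by
      intro R hR
      have hRt : 0 < R - t := by linarith
      have hR0 : 0 < R := lt_trans ht hR
      set lam : ℝ := Real.sqrt (R * (R - t)) with hlam_def
      have hlam2 : lam ^ 2 = R * (R - t) := Real.sq_sqrt (by positivity)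
      have hlam : 0 < lam := Real.sqrt_pos.mpr (by positivity)
      set x0 : EN N := p - (R / t) • (p - q) with hx0_def
      have hqx0 : q - x0 = (R / t - 1) • (p - q) := by
        rw [hx0_def]; module
      have hnorm : ‖q - x0‖ = R - t := by
        rw [hqx0, norm_smul, Real.norm_eq_abs, abs_of_pos, ← ht_def]
        · field_simp
        · rw [lt_sub_iff_add_lt, zero_add, lt_div_iff₀ ht, one_mul]; exact hR
      have hmem : q ∈ Metric.ball x0 lam := by
        rw [Metric.mem_ball, dist_eq_norm, hnorm, hlam_def, Real.lt_sqrt hRt.le]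
        nlinarith
      have hneq : q ≠ x0 := by
        intro hqe
        rw [hqe, sub_self, norm_zero] at hnorm
        linarith
      have hker := h x0 lam hlam q hmem hneq
      have hpt : (lam ^ 2 / ‖q - x0‖ ^ 2) • (q - x0) + x0 = p := by
        rw [hnorm, hlam2, hqx0, smul_smul]
        have hscal : R * (R - t) / (R - t) ^ 2 * (R / t - 1) = R / t := by
          field_simp
        rw [hscal, hx0_def]
        module
      rw [kelvin, hpt, hnorm] at hker
      exact hker
    have hlim : Filter.Tendsto
        (fun R : ℝ => (Real.sqrt (R * (R - t)) / (R - t)) ^ ν * u p)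
        atTop (𝓝 (u p)) := by
      have ha : Filter.Tendsto (fun R : ℝ => R - t) atTop atTop :=
        tendsto_atTop_add_const_right _ (-t) tendsto_id
      have h0 : Filter.Tendsto (fun R : ℝ => t / (R - t)) atTop (𝓝 0) :=
        Filter.Tendsto.div_atTop tendsto_const_nhds ha
      have h1 : Filter.Tendsto (fun R : ℝ => R / (R - t)) atTop (𝓝 1) := by
        have h1' : Filter.Tendsto (fun R : ℝ => 1 + t / (R - t)) atTop (𝓝 1) := by
          have := h0.const_add (1 : ℝ)
          simpa using this
        refine h1'.congr' ?_
        filter_upwards [eventually_gt_atTop t] with R hR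
        have hRt : R - t ≠ 0 := ne_of_gt (by linarith)
        field_simp
        ring
      have h2 : Filter.Tendsto (fun R : ℝ => Real.sqrt (R / (R - t))) atTop (𝓝 1) := by
        have := (Real.continuous_sqrt.tendsto 1).comp h1
        simpa [Function.comp_def] using this
      have h3 : Filter.Tendsto (fun R : ℝ => Real.sqrt (R * (R - t)) / (R - t))
          atTop (𝓝 1) := by
        refine h2.congr' ?_
        filter_upwards [eventually_gt_atTop t] with R hR
        have hRt : 0 < R - t := by linarith
        have hR0 : 0 < R := lt_trans ht hR
        rw [show R * (R - t) = R / (R - t) * (R - t) ^ 2 by field_simp,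
          Real.sqrt_mul (by positivity), Real.sqrt_sq hRt.le]
        field_simp
      have h4 : Filter.Tendsto
          (fun R : ℝ => (Real.sqrt (R * (R - t)) / (R - t)) ^ ν) atTop (𝓝 1) := by
        have := h3.rpow_const (p := ν) (Or.inl one_ne_zero)
        simpa using this
      have := h4.mul_const (u p)
      simpa using this
    exact ge_of_tendsto hlim (by
      filter_upwards [eventually_gt_atTop t] with R hR using main R hR)
  exact ⟨u 0, fun x => le_antisymm (key 0 x) (key x 0)⟩
end
end

section
/- Let N ≥ 5, let w ∈ C_0^∞(ℝ^N) be a fixed nonzero nonnegative radial function supported in the unit ball B₁(0), and for δ > 0, z ∈ ℝ^N set w_{δ,z}(x) = δ^{−(N−2)/2} w((x − z)/δ). If a ∈ L^{N/2}(ℝ^N), then: (i) lim_{δ → 0⁺} ∫_{ℝ^N} a(x) w_{δ,z}² dx = 0 uniformly for z ∈ ℝ^N; (ii) lim_{δ → +∞} ∫_{ℝ^N} a(x) w_{δ,z}² dx = 0 uniformly for z ∈ ℝ^N; and (iii) lim_{|z| → +∞} ∫_{ℝ^N} a(x) w_{δ,z}² dx = 0 uniformly for δ > 0. -/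
open MeasureTheory Real Filter Topology Metric RealInnerProductSpace
open scoped ENNReal

noncomputable section

variable {N : ℕ}

lemma scale_integral (N : ℕ) (f : EN N → ℝ) {δ : ℝ} (hδ : 0 < δ) (z : EN N) :
    ∫ x, f (δ⁻¹ • (x - z)) = δ ^ (N : ℕ) * ∫ x, f x := by
  have h1 : ∫ x, f (δ⁻¹ • (x - z)) = ∫ x, f (δ⁻¹ • x) :=
    integral_sub_right_eq_self (fun x => f (δ⁻¹ • x)) z
  rw [h1, Measure.integral_comp_smul volume f δ⁻¹]
  simp only [finrank_euclideanSpace_fin, smul_eq_mul, inv_pow, inv_inv]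
  rw [abs_of_pos (by positivity)]

variable {N : ℕ}

lemma wdz_nonneg {w : EN N → ℝ} (hwpos : ∀ x, 0 ≤ w x) {δ : ℝ} (hδ : 0 < δ) (z x : EN N) :
    0 ≤ wdz N w δ z x := by
  have := hwpos (δ⁻¹ • (x - z)); unfold wdz; positivity

lemma wdz_zero_of {w : EN N → ℝ} (hsupp : tsupport w ⊆ Metric.closedBall 0 1)
    {δ : ℝ} (hδ : 0 < δ) {z x : EN N} (hx : x ∉ Metric.closedBall z δ) :
    wdz N w δ z x = 0 := by
  have hnorm : ‖δ⁻¹ • (x - z)‖ > 1 := by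
    rw [norm_smul, Real.norm_eq_abs, abs_of_pos (by positivity)]
    have hd : δ < ‖x - z‖ := by
      simpa [Metric.mem_closedBall, dist_eq_norm, not_le] using hx
    rw [inv_mul_eq_div]
    exact (one_lt_div hδ).mpr hd
  have : δ⁻¹ • (x - z) ∉ tsupport w := fun h => by
    have := hsupp h
    simp only [Metric.mem_closedBall, dist_zero_right] at this
    linarith
  unfold wdz
  rw [image_eq_zero_of_notMem_tsupport this, mul_zero]

lemma wdz_sq_le {w : EN N → ℝ} (hwpos : ∀ x, 0 ≤ w x) {C : ℝ} (hC : ∀ x, w x ≤ C)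
    {δ : ℝ} (hδ : 0 < δ) (z x : EN N) :
    wdz N w δ z x ^ 2 ≤ C ^ 2 * δ ^ (-((N : ℝ) - 2)) := by
  have h1 : wdz N w δ z x ^ 2 =
      δ ^ (-((N : ℝ) - 2)) * w (δ⁻¹ • (x - z)) ^ 2 := by
    unfold wdz
    rw [mul_pow, ← Real.rpow_natCast (δ ^ (-(((N : ℝ) - 2) / 2))) 2,
      ← Real.rpow_mul hδ.le]
    norm_num
  rw [h1, mul_comm]
  have h2 : w (δ⁻¹ • (x - z)) ^ 2 ≤ C ^ 2 :=
    pow_le_pow_left₀ (hwpos _) (hC _) 2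
  exact mul_le_mul_of_nonneg_right h2 (by positivity)

lemma wdz_lq_norm {w : EN N → ℝ} (hwpos : ∀ x, 0 ≤ w x) (hN2 : (2 : ℝ) < N)
    {δ : ℝ} (hδ : 0 < δ) (z : EN N) :
    ∫ x, (wdz N w δ z x ^ 2) ^ ((N : ℝ) / ((N : ℝ) - 2)) =
      ∫ x, (w x ^ 2) ^ ((N : ℝ) / ((N : ℝ) - 2)) := by
  set q : ℝ := (N : ℝ) / ((N : ℝ) - 2) with hq
  have hpt : ∀ x : EN N, (wdz N w δ z x ^ 2) ^ q =
      δ ^ (-(N : ℝ)) * (w (δ⁻¹ • (x - z)) ^ 2) ^ q := by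
    intro x
    unfold wdz
    rw [mul_pow, ← Real.rpow_natCast (δ ^ (-(((N : ℝ) - 2) / 2))) 2,
      ← Real.rpow_mul hδ.le,
      Real.mul_rpow (by positivity) (by positivity),
      ← Real.rpow_mul hδ.le]
    congr 2
    have hne : (N : ℝ) - 2 ≠ 0 := by linarith
    rw [hq, ← mul_div_assoc, div_eq_iff hne]
    ring
  simp_rw [hpt]
  rw [integral_const_mul, scale_integral N (fun y => (w y ^ 2) ^ q) hδ z,
    ← mul_assoc, ← Real.rpow_natCast δ N, ← Real.rpow_add hδ]
  norm_num

lemma tail_small {a' : EN N → ℝ} (hm : StronglyMeasurable a') {p : ℝ}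
    (hint : Integrable (fun x => |a' x| ^ p)) :
    ∀ η > (0 : ℝ), ∃ n : ℕ,
      ∫ x in (Metric.closedBall (0 : EN N) n ∩ {x | |a' x| ≤ n})ᶜ, |a' x| ^ p < η := by
  intro η hη
  set g : EN N → ℝ := fun x => |a' x| ^ p with hg
  set s : ℕ → Set (EN N) := fun n => Metric.closedBall (0 : EN N) n ∩ {x | |a' x| ≤ n}
    with hs
  have hsm : ∀ n, MeasurableSet (s n) := fun n =>
    measurableSet_closedBall.inter (measurableSet_le hm.measurable.abs measurable_const)
  have hmono : Monotone s := by
    intro i j hij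
    exact Set.inter_subset_inter
      (Metric.closedBall_subset_closedBall (by exact_mod_cast hij))
      (fun x hx => le_trans hx (by exact_mod_cast Nat.cast_le.mpr hij : (i:ℝ) ≤ j))
  have hunion : (⋃ n, s n) = Set.univ := by
    refine Set.eq_univ_of_forall fun x => ?_
    obtain ⟨n, hn⟩ := exists_nat_ge (max ‖x‖ |a' x|)
    exact Set.mem_iUnion.mpr ⟨n, ⟨by
      simpa [Metric.mem_closedBall] using le_trans (le_max_left _ _) hn,
      le_trans (le_max_right _ _) hn⟩⟩
  have htend : Tendsto (fun n => ∫ x in s n, g x) atTop (𝓝 (∫ x, g x)) := by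
    have := tendsto_setIntegral_of_monotone hsm hmono (by rw [hunion]; exact hint.integrableOn)
    rwa [hunion, setIntegral_univ] at this
  have htend0 : Tendsto (fun n => ∫ x in (s n)ᶜ, g x) atTop (𝓝 0) := by
    have heq : ∀ n, ∫ x in (s n)ᶜ, g x = (∫ x, g x) - ∫ x in s n, g x := by
      intro n
      have := integral_add_compl (hsm n) hint
      linarith
    simp_rw [heq]
    have : Tendsto (fun n => (∫ x, g x) - ∫ x in s n, g x) atTop
        (𝓝 ((∫ x, g x) - ∫ x, g x)) := tendsto_const_nhds.sub htend
    simpa using this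
  have := (htend0.eventually (eventually_lt_nhds hη)).exists
  obtain ⟨n, hn⟩ := this
  exact ⟨n, hn⟩

set_option maxHeartbeats 1000000 in
lemma key_estimate (N : ℕ) (hN : 5 ≤ N) (w : EN N → ℝ) (hsm : ContDiff ℝ (⊤ : ℕ∞) w)
    (hsupp : tsupport w ⊆ Metric.closedBall 0 1) (hwpos : ∀ x, 0 ≤ w x)
    (a : EN N → ℝ) (ha : MemLp a (ENNReal.ofReal ((N : ℝ) / 2)) volume) :
    ∀ ε > (0 : ℝ), ∃ (n : ℕ) (D : ℝ), 0 ≤ D ∧ ∀ δ : ℝ, 0 < δ → ∀ z : EN N,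
      |∫ x, a x * wdz N w δ z x ^ 2| ≤
        ε / 2 + D * δ ^ (-((N : ℝ) - 2)) *
          (volume (Metric.closedBall z δ ∩ Metric.closedBall (0 : EN N) (n : ℝ))).toReal := by
  intro ε hε
  have hN5 : (5 : ℝ) ≤ (N : ℝ) := by exact_mod_cast hN
  have hN2 : (2 : ℝ) < N := by linarith
  set p : ℝ := (N : ℝ) / 2 with hpdef
  set q : ℝ := (N : ℝ) / ((N : ℝ) - 2) with hqdef
  have hNne : (N : ℝ) ≠ 0 := by linarith
  have hN2ne : (N : ℝ) - 2 ≠ 0 := by linarith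
  have hp0 : 0 < p := by rw [hpdef]; linarith
  have hq0 : 0 < q := by rw [hqdef]; exact div_pos (by linarith) (by linarith)
  have hpq : p.HolderConjugate q := by
    rw [Real.holderConjugate_iff]
    constructor
    · rw [hpdef]; linarith
    · rw [hpdef, hqdef]; field_simp; ring
  -- bound on w
  have hw_cs : HasCompactSupport w :=
    IsCompact.of_isClosed_subset (isCompact_closedBall _ _) (isClosed_tsupport w) hsupp
  obtain ⟨C, hCnorm⟩ := hsm.continuous.bounded_above_of_compact_support hw_cs
  have hC : ∀ x, w x ≤ C := fun x => le_trans (le_abs_self _) (by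
    simpa [Real.norm_eq_abs] using hCnorm x)
  have hC0 : 0 ≤ C := le_trans (hwpos 0) (hC 0)
  -- measurable representative
  obtain ⟨a', ha'sm, haa'⟩ := ha.1
  have ha' : MemLp a' (ENNReal.ofReal ((N : ℝ) / 2)) volume := ha.ae_eq haa'
  have hgint : Integrable (fun x => |a' x| ^ p) volume := by
    have h := ha'.integrable_norm_rpow (by simp [ENNReal.ofReal_eq_zero]; linarith)
      ENNReal.ofReal_ne_top
    rw [ENNReal.toReal_ofReal (by positivity)] at h
    simpa [Real.norm_eq_abs, hpdef] using h
  set K : ℝ := (∫ x, (w x ^ 2) ^ q) ^ (1 / q) with hKdef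
  have hK0 : 0 ≤ K := Real.rpow_nonneg (integral_nonneg fun x => by positivity) _
  set η : ℝ := (ε / (2 * (K + 1))) ^ p with hηdef
  have hη : 0 < η := Real.rpow_pos_of_pos (by positivity) _
  obtain ⟨n, hn⟩ := tail_small ha'sm hgint η hη
  refine ⟨n, (n : ℝ) * C ^ 2, by positivity, ?_⟩
  intro δ hδ z
  set u : EN N → ℝ := wdz N w δ z with hudef
  have hu0 : ∀ x, 0 ≤ u x := wdz_nonneg hwpos hδ z
  have husupp : ∀ x ∉ Metric.closedBall z δ, u x = 0 := fun x hx => wdz_zero_of hsupp hδ hx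
  have hub : ∀ x, u x ^ 2 ≤ C ^ 2 * δ ^ (-((N : ℝ) - 2)) := wdz_sq_le hwpos hC hδ z
  have hucont : Continuous u := by
    exact continuous_const.mul (hsm.continuous.comp ((continuous_id.sub continuous_const).const_smul δ⁻¹))
  have hu2cont : Continuous (fun x => u x ^ 2) := hucont.pow 2
  have hu2cs : HasCompactSupport (fun x => u x ^ 2) :=
    HasCompactSupport.intro (isCompact_closedBall z δ)
      (fun x hx => by rw [husupp x hx]; ring)
  have hu2mem : MemLp (fun x => u x ^ 2) (ENNReal.ofReal q) volume :=
    hu2cont.memLp_of_hasCompactSupport hu2cs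
  set s : Set (EN N) := Metric.closedBall (0 : EN N) n ∩ {x | |a' x| ≤ n} with hsdef
  have hsmeas : MeasurableSet s :=
    measurableSet_closedBall.inter (measurableSet_le ha'sm.measurable.abs measurable_const)
  set f1 : EN N → ℝ := fun x => a' x * u x ^ 2 with hf1def
  -- integrability of f1
  haveI hfin : IsFiniteMeasure (volume.restrict (Metric.closedBall z δ)) :=
    ⟨by rw [Measure.restrict_apply_univ]; exact (isCompact_closedBall z δ).measure_lt_top⟩
  have ha'on : IntegrableOn a' (Metric.closedBall z δ) volume :=
    (ha'.restrict _).integrable (ENNReal.one_le_ofReal.mpr (by linarith))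
  have hf1on : IntegrableOn f1 (Metric.closedBall z δ) volume := by
    have h := ha'on.bdd_mul (hucont.pow 2).aestronglyMeasurable.restrict
      (c := C ^ 2 * δ ^ (-((N : ℝ) - 2)))
      (Eventually.of_forall fun x => by
        rw [Real.norm_eq_abs, Pi.pow_apply, abs_of_nonneg (sq_nonneg (u x))]; exact hub x)
    exact h.congr (Eventually.of_forall fun x => by simp [hf1def, mul_comm])
  have hf1 : Integrable f1 volume := by
    have heq : f1 = (Metric.closedBall z δ).indicator f1 := by
      funext x
      by_cases hx : x ∈ Metric.closedBall z δ
      · rw [Set.indicator_of_mem hx]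
      · rw [Set.indicator_of_notMem hx, hf1def]; simp [husupp x hx]
    rw [heq, integrable_indicator_iff measurableSet_closedBall]
    exact hf1on
  have hsplit : ∫ x, f1 x = (∫ x in s, f1 x) + ∫ x in sᶜ, f1 x :=
    (integral_add_compl hsmeas hf1).symm
  -- bound on T1
  set bnd : EN N → ℝ := (Metric.closedBall z δ ∩ Metric.closedBall (0 : EN N) n).indicator
    (fun _ => (n : ℝ) * (C ^ 2 * δ ^ (-((N : ℝ) - 2)))) with hbnddef
  have hintermeas : MeasurableSet (Metric.closedBall z δ ∩ Metric.closedBall (0 : EN N) (n:ℝ)) :=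
    measurableSet_closedBall.inter measurableSet_closedBall
  have hbndint : Integrable bnd volume := by
    rw [hbnddef, integrable_indicator_iff hintermeas]
    exact (integrableOn_const_iff).mpr (Or.inr ((measure_mono Set.inter_subset_left).trans_lt
      (isCompact_closedBall z δ).measure_lt_top))
  have hT1 : |∫ x in s, f1 x| ≤ (n : ℝ) * C ^ 2 * δ ^ (-((N : ℝ) - 2)) *
      (volume (Metric.closedBall z δ ∩ Metric.closedBall (0 : EN N) (n : ℝ))).toReal := by
    have e1 : |∫ x in s, f1 x| ≤ ∫ x in s, |f1 x| := by
      simpa [Real.norm_eq_abs] using norm_integral_le_integral_norm (μ := volume.restrict s) f1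
    have e2 : ∫ x in s, |f1 x| ≤ ∫ x in s, bnd x := by
      refine setIntegral_mono_on hf1.abs.integrableOn hbndint.integrableOn hsmeas ?_
      intro x hx
      obtain ⟨hx1, hx2⟩ := hx
      by_cases hxz : x ∈ Metric.closedBall z δ
      · rw [hbnddef, Set.indicator_of_mem (Set.mem_inter hxz hx1), hf1def, abs_mul,
          abs_of_nonneg (by positivity : (0:ℝ) ≤ u x ^ 2)]
        exact mul_le_mul hx2 (hub x) (by positivity) (by positivity)
      · rw [hf1def]; simp only [husupp x hxz]
        simp only [ne_eq, OfNat.ofNat_ne_zero, not_false_eq_true, zero_pow, mul_zero, abs_zero]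
        exact Set.indicator_nonneg (fun _ _ => by positivity) x
    have e3 : ∫ x in s, bnd x ≤ ∫ x, bnd x :=
      setIntegral_le_integral hbndint
        (Eventually.of_forall fun x => Set.indicator_nonneg (fun _ _ => by positivity) x)
    have e4 : ∫ x, bnd x = (n : ℝ) * C ^ 2 * δ ^ (-((N : ℝ) - 2)) *
        (volume (Metric.closedBall z δ ∩ Metric.closedBall (0 : EN N) (n : ℝ))).toReal := by
      rw [hbnddef, integral_indicator_const _ hintermeas]
      simp only [smul_eq_mul]
      rw [measureReal_def]
      ring
    linarith
  -- bound on T2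
  have hT2 : |∫ x in sᶜ, f1 x| ≤ ε / 2 := by
    set f2 : EN N → ℝ := sᶜ.indicator (fun x => |a' x|) with hf2def
    have hf2mem : MemLp f2 (ENNReal.ofReal p) volume := by
      have h1 : MemLp (fun x => |a' x|) (ENNReal.ofReal p) volume := by
        simpa [Real.norm_eq_abs] using ha'.norm
      exact h1.indicator hsmeas.compl
    have step1 : |∫ x in sᶜ, f1 x| ≤ ∫ x, f2 x * u x ^ 2 := by
      have e1 : |∫ x in sᶜ, f1 x| ≤ ∫ x in sᶜ, |f1 x| := by
        simpa [Real.norm_eq_abs] using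
          norm_integral_le_integral_norm (μ := volume.restrict sᶜ) f1
      have e2 : ∫ x in sᶜ, |f1 x| = ∫ x, f2 x * u x ^ 2 := by
        rw [← integral_indicator hsmeas.compl]
        congr 1
        funext x
        by_cases hx : x ∈ sᶜ
        · rw [Set.indicator_of_mem hx, hf2def, Set.indicator_of_mem hx, hf1def, abs_mul,
            abs_of_nonneg (by positivity : (0:ℝ) ≤ u x ^ 2)]
        · rw [Set.indicator_of_notMem hx, hf2def, Set.indicator_of_notMem hx, zero_mul]
      linarith [le_of_eq e2]
    have step2 : ∫ x, f2 x * u x ^ 2 ≤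
        (∫ x, f2 x ^ p) ^ (1 / p) * (∫ x, (u x ^ 2) ^ q) ^ (1 / q) :=
      integral_mul_le_Lp_mul_Lq_of_nonneg hpq
        (Eventually.of_forall fun x => Set.indicator_nonneg (fun y _ => abs_nonneg _) x)
        (Eventually.of_forall fun x => by positivity) hf2mem hu2mem
    have step3 : ∫ x, f2 x ^ p = ∫ x in sᶜ, |a' x| ^ p := by
      rw [← integral_indicator hsmeas.compl]
      congr 1
      funext x
      by_cases hx : x ∈ sᶜ
      · rw [hf2def, Set.indicator_of_mem hx, Set.indicator_of_mem hx]
      · rw [hf2def, Set.indicator_of_notMem hx, Set.indicator_of_notMem hx,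
          Real.zero_rpow hp0.ne']
    have step4 : (∫ x, (u x ^ 2) ^ q) ^ (1 / q) = K := by
      rw [hKdef, hudef, hqdef]
      rw [wdz_lq_norm hwpos hN2 hδ z]
    have step5 : (∫ x, f2 x ^ p) ^ (1 / p) ≤ ε / (2 * (K + 1)) := by
      have h1 : (∫ x, f2 x ^ p) ^ (1 / p) ≤ η ^ (1 / p) := by
        refine Real.rpow_le_rpow ?_ ?_ (by positivity)
        · rw [step3]; exact setIntegral_nonneg hsmeas.compl fun x _ => by positivity
        · rw [step3]; exact (hn).le
      have h2 : η ^ (1 / p) = ε / (2 * (K + 1)) := by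
        rw [hηdef, ← Real.rpow_mul (by positivity), mul_one_div_cancel hp0.ne',
          Real.rpow_one]
      rw [h2] at h1
      exact h1
    have step6 : (∫ x, f2 x ^ p) ^ (1 / p) * (∫ x, (u x ^ 2) ^ q) ^ (1 / q) ≤
        (ε / (2 * (K + 1))) * K := by
      rw [step4]
      exact mul_le_mul_of_nonneg_right step5 hK0
    have step7 : (ε / (2 * (K + 1))) * K ≤ ε / 2 := by
      rw [div_mul_eq_mul_div, div_le_div_iff₀ (by positivity) (by norm_num)]
      nlinarith
    linarith
  -- conclusion
  have hcongr : ∫ x, a x * u x ^ 2 = ∫ x, f1 x := by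
    refine integral_congr_ae ?_
    filter_upwards [haa'] with x hx
    rw [hf1def, hx]
  calc |∫ x, a x * wdz N w δ z x ^ 2| = |(∫ x in s, f1 x) + ∫ x in sᶜ, f1 x| := by
        rw [← hsplit, ← hudef, hcongr]
    _ ≤ |∫ x in s, f1 x| + |∫ x in sᶜ, f1 x| := abs_add_le _ _
    _ ≤ ε / 2 + (n : ℝ) * C ^ 2 * δ ^ (-((N : ℝ) - 2)) *
          (volume (Metric.closedBall z δ ∩ Metric.closedBall (0 : EN N) (n : ℝ))).toReal := by
        linarith


set_option maxHeartbeats 1000000 in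
/-- concentration-compactness estimates for `∫ a w_{δ,z}²`. -/
theorem statement_17 (N : ℕ) (hN : 5 ≤ N) (w : EN N → ℝ)
    (hsm : ContDiff ℝ (⊤ : ℕ∞) w) (hsupp : tsupport w ⊆ Metric.closedBall 0 1)
    (hwpos : ∀ x, 0 ≤ w x) (hwne : w ≠ 0)
    (hrad : ∀ x y : EN N, ‖x‖ = ‖y‖ → w x = w y)
    (a : EN N → ℝ) (ha : MemLp a (ENNReal.ofReal ((N : ℝ) / 2)) volume) :
    (∀ ε > (0 : ℝ), ∃ δ0 > (0 : ℝ), ∀ δ : ℝ, 0 < δ → δ < δ0 → ∀ z : EN N,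
      |∫ x, a x * wdz N w δ z x ^ 2| < ε) ∧
    (∀ ε > (0 : ℝ), ∃ M : ℝ, ∀ δ : ℝ, M < δ → ∀ z : EN N,
      |∫ x, a x * wdz N w δ z x ^ 2| < ε) ∧
    (∀ ε > (0 : ℝ), ∃ R : ℝ, ∀ z : EN N, R < ‖z‖ → ∀ δ > (0 : ℝ),
      |∫ x, a x * wdz N w δ z x ^ 2| < ε) := by
  have hN5 : (5 : ℝ) ≤ (N : ℝ) := by exact_mod_cast hN
  have hkey := key_estimate N hN w hsm hsupp hwpos a ha
  set B1 : ℝ := (volume (Metric.ball (0 : EN N) 1)).toReal with hB1def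
  have hB10 : 0 ≤ B1 := ENNReal.toReal_nonneg
  -- volume upper bounds
  have hvol1 : ∀ δ : ℝ, 0 < δ → ∀ (z : EN N) (n : ℕ),
      (volume (Metric.closedBall z δ ∩ Metric.closedBall (0 : EN N) (n : ℝ))).toReal ≤
        δ ^ (N : ℕ) * B1 := by
    intro δ hδ z n
    have hball : volume (Metric.closedBall z δ) =
        ENNReal.ofReal (δ ^ (N : ℕ)) * volume (Metric.ball (0 : EN N) 1) := by
      rw [Measure.addHaar_closedBall _ z hδ.le, finrank_euclideanSpace_fin]
    have hle : volume (Metric.closedBall z δ ∩ Metric.closedBall (0 : EN N) (n : ℝ)) ≤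
        volume (Metric.closedBall z δ) := measure_mono Set.inter_subset_left
    have hfin : volume (Metric.closedBall z δ) ≠ ⊤ := by
      rw [hball]
      exact ENNReal.mul_ne_top ENNReal.ofReal_ne_top measure_ball_lt_top.ne
    calc (volume (Metric.closedBall z δ ∩ Metric.closedBall (0 : EN N) (n : ℝ))).toReal
        ≤ (volume (Metric.closedBall z δ)).toReal := ENNReal.toReal_mono hfin hle
      _ = δ ^ (N : ℕ) * B1 := by
          rw [hball, ENNReal.toReal_mul, ENNReal.toReal_ofReal (by positivity), hB1def]
  have hvol2 : ∀ (δ : ℝ) (z : EN N) (n : ℕ),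
      (volume (Metric.closedBall z δ ∩ Metric.closedBall (0 : EN N) (n : ℝ))).toReal ≤
        (volume (Metric.closedBall (0 : EN N) (n : ℝ))).toReal := fun δ z n =>
    ENNReal.toReal_mono (isCompact_closedBall _ _).measure_lt_top.ne
      (measure_mono Set.inter_subset_right)
  -- big-δ bound, shared by (ii) and (iii)
  have hbig : ∀ (n : ℕ) (D : ℝ), 0 ≤ D → ∀ ε > (0 : ℝ), ∀ δ : ℝ,
      max 1 (2 * (D * (volume (Metric.closedBall (0 : EN N) (n : ℝ))).toReal + 1) / ε) < δ →
      ∀ z : EN N, D * δ ^ (-((N : ℝ) - 2)) *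
        (volume (Metric.closedBall z δ ∩ Metric.closedBall (0 : EN N) (n : ℝ))).toReal
          < ε / 2 := by
    intro n D hD ε hε δ hδM z
    set Vn : ℝ := (volume (Metric.closedBall (0 : EN N) (n : ℝ))).toReal with hVndef
    have hVn0 : 0 ≤ Vn := ENNReal.toReal_nonneg
    have hδ1 : (1 : ℝ) ≤ δ := le_of_lt (lt_of_le_of_lt (le_max_left _ _) hδM)
    have hδ0 : 0 < δ := by linarith
    have hδε : 2 * (D * Vn + 1) < δ * ε := by
      have h := lt_of_le_of_lt (le_max_right 1 (2 * (D * Vn + 1) / ε)) hδM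
      rw [div_lt_iff₀ hε] at h
      linarith
    have hexp : δ ^ (-((N : ℝ) - 2)) ≤ δ⁻¹ := by
      rw [← Real.rpow_neg_one δ]
      exact Real.rpow_le_rpow_of_exponent_le hδ1 (by linarith)
    calc D * δ ^ (-((N : ℝ) - 2)) *
          (volume (Metric.closedBall z δ ∩ Metric.closedBall (0 : EN N) (n : ℝ))).toReal
        ≤ D * δ ^ (-((N : ℝ) - 2)) * Vn := by
          refine mul_le_mul_of_nonneg_left (hvol2 δ z n) ?_
          have : (0:ℝ) ≤ δ ^ (-((N : ℝ) - 2)) := Real.rpow_nonneg hδ0.le _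
          positivity
      _ ≤ D * δ⁻¹ * Vn := by
          refine mul_le_mul_of_nonneg_right (mul_le_mul_of_nonneg_left hexp hD) hVn0
      _ = D * Vn / δ := by ring
      _ < ε / 2 := by
          rw [div_lt_iff₀ hδ0]
          nlinarith
  refine ⟨?_, ?_, ?_⟩
  · -- (i) δ → 0
    intro ε hε
    obtain ⟨n, D, hD, hk⟩ := hkey ε hε
    refine ⟨min 1 (ε / (2 * (D * B1 + 1))), by positivity, ?_⟩
    intro δ hδ hδ0 z
    have hδ1 : δ < 1 := lt_of_lt_of_le hδ0 (min_le_left _ _)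
    have hδ2 : δ < ε / (2 * (D * B1 + 1)) := lt_of_lt_of_le hδ0 (min_le_right _ _)
    have hterm : D * δ ^ (-((N : ℝ) - 2)) *
        (volume (Metric.closedBall z δ ∩ Metric.closedBall (0 : EN N) (n : ℝ))).toReal
          < ε / 2 := by
      have hexp : δ ^ (-((N : ℝ) - 2)) * δ ^ (N : ℕ) = δ ^ 2 := by
        rw [← Real.rpow_natCast δ N, ← Real.rpow_add hδ,
          show (-((N : ℝ) - 2) + N) = ((2 : ℕ) : ℝ) by push_cast; ring,
          Real.rpow_natCast]
      have h1 : D * δ ^ (-((N : ℝ) - 2)) *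
          (volume (Metric.closedBall z δ ∩ Metric.closedBall (0 : EN N) (n : ℝ))).toReal ≤
          D * B1 * δ ^ 2 := by
        have hrp : (0:ℝ) ≤ δ ^ (-((N : ℝ) - 2)) := Real.rpow_nonneg hδ.le _
        calc D * δ ^ (-((N : ℝ) - 2)) *
            (volume (Metric.closedBall z δ ∩ Metric.closedBall (0 : EN N) (n : ℝ))).toReal
            ≤ D * δ ^ (-((N : ℝ) - 2)) * (δ ^ (N : ℕ) * B1) := by
              refine mul_le_mul_of_nonneg_left (hvol1 δ hδ z n) (by positivity)
          _ = D * B1 * (δ ^ (-((N : ℝ) - 2)) * δ ^ (N : ℕ)) := by ring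
          _ = D * B1 * δ ^ 2 := by rw [hexp]
      have h2 : D * B1 * δ ^ 2 < ε / 2 := by
        have hδsq : δ ^ 2 < ε / (2 * (D * B1 + 1)) := by nlinarith
        have h3 : (D * B1 + 1) * (ε / (2 * (D * B1 + 1))) = ε / 2 := by
          field_simp
        calc D * B1 * δ ^ 2 ≤ (D * B1 + 1) * δ ^ 2 := by nlinarith
          _ < (D * B1 + 1) * (ε / (2 * (D * B1 + 1))) := by
              refine mul_lt_mul_of_pos_left hδsq (by positivity)
          _ = ε / 2 := h3
      linarith
    have := hk δ hδ z
    linarith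
  · -- (ii) δ → ∞
    intro ε hε
    obtain ⟨n, D, hD, hk⟩ := hkey ε hε
    refine ⟨max 1 (2 * (D * (volume (Metric.closedBall (0 : EN N) (n : ℝ))).toReal + 1) / ε),
      ?_⟩
    intro δ hδM z
    have hδ0 : 0 < δ :=
      lt_trans one_pos (lt_of_le_of_lt (le_max_left _ _) hδM)
    have hterm := hbig n D hD ε hε δ hδM z
    have := hk δ hδ0 z
    linarith
  · -- (iii) |z| → ∞
    intro ε hε
    obtain ⟨n, D, hD, hk⟩ := hkey ε hε
    set M : ℝ := max 1
      (2 * (D * (volume (Metric.closedBall (0 : EN N) (n : ℝ))).toReal + 1) / ε) with hMdef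
    refine ⟨(n : ℝ) + M, ?_⟩
    intro z hz δ hδ0
    have hkz := hk δ hδ0 z
    by_cases hδM : M < δ
    · have hterm := hbig n D hD ε hε δ hδM z
      linarith
    · push_neg at hδM
      have hempty : Metric.closedBall z δ ∩ Metric.closedBall (0 : EN N) (n : ℝ) = ∅ := by
        rw [Set.eq_empty_iff_forall_notMem]
        rintro x ⟨hx1, hx2⟩
        rw [Metric.mem_closedBall, dist_eq_norm] at hx1 hx2
        simp only [sub_zero] at hx2
        have : ‖z‖ ≤ δ + (n : ℝ) := by
          calc ‖z‖ = ‖z - x + x‖ := by rw [sub_add_cancel]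
            _ ≤ ‖z - x‖ + ‖x‖ := norm_add_le _ _
            _ ≤ δ + (n : ℝ) := by
                rw [norm_sub_rev]
                exact add_le_add hx1 hx2
        linarith
      rw [hempty] at hkz
      simp only [measure_empty, ENNReal.toReal_zero, mul_zero] at hkz
      linarith
end
end
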